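/- Let F : D → ℝⁿ be a vector field and T₀, T₁, V₁ : D → ℝ smooth functions on an open set D ⊆ ℝⁿ, and let A = G·Gᵀ be a symmetric matrix field. Assume (i) F·∇T₀ = −1, (ii) F·∇T₁ = −(1/2) Σ_{ij} A_{ij} ∂²_{ij} T₀, and (iii) F·∇(V₁ + 2T₀T₁) + (1/2) Σ_{ij} A_{ij} ∂²_{ij}(T₀²) = −2T₁. Then F·∇V₁ = −Σ_{ij} A_{ij} ∂_i T₀ ∂_j T₀. -/

import Mathlib

open Matrix

/-- The `i`-th partial derivative of `f : (Fin n → ℝ) → ℝ`. -/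
noncomputable def pd {n : ℕ} (i : Fin n) (f : (Fin n → ℝ) → ℝ) (x : Fin n → ℝ) : ℝ :=
  fderiv ℝ f x (Pi.single i 1)

/-- Directional derivative of `φ` along the vector field `F`, i.e. `F·∇φ`. -/
noncomputable def gradDot {n : ℕ} (F : (Fin n → ℝ) → Fin n → ℝ)
    (φ : (Fin n → ℝ) → ℝ) (x : Fin n → ℝ) : ℝ :=
  ∑ i, F x i * pd i φ x

/-! By the Leibniz rule for `F·∇` and `∂_i∂_j(T₀²) = 2T₀ ∂²_{ij}T₀ + 2 ∂_iT₀ ∂_jT₀`,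
hypothesis (iii) reads
`F·∇V₁ + 2T₀ F·∇T₁ + 2T₁ F·∇T₀ + T₀ Σ A_{ij} ∂²_{ij}T₀ + Σ A_{ij} ∂_iT₀ ∂_jT₀ = -2T₁`.
Equation (i) cancels the right-hand side against `2T₁ F·∇T₀`, and (ii) cancels
`2T₀ F·∇T₁` against `T₀ Σ A_{ij} ∂²_{ij}T₀`; what is left is the claim. -/

section PartialDerivative

variable {n : ℕ} {f g : (Fin n → ℝ) → ℝ} {x : Fin n → ℝ}

lemma pd_add (i : Fin n) (hf : DifferentiableAt ℝ f x) (hg : DifferentiableAt ℝ g x) :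
    pd i (fun y => f y + g y) x = pd i f x + pd i g x := by
  simp [pd, fderiv_fun_add hf hg]

lemma pd_mul (i : Fin n) (hf : DifferentiableAt ℝ f x) (hg : DifferentiableAt ℝ g x) :
    pd i (fun y => f y * g y) x = f x * pd i g x + g x * pd i f x := by
  simp [pd, fderiv_fun_mul hf hg]

lemma pd_const_mul (i : Fin n) (c : ℝ) (hf : DifferentiableAt ℝ f x) :
    pd i (fun y => c * f y) x = c * pd i f x := by
  simp [pd, fderiv_const_mul hf c]

lemma pd_sq (i : Fin n) (hf : DifferentiableAt ℝ f x) :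
    pd i (fun y => f y ^ 2) x = 2 * f x * pd i f x := by
  simp [pd, fderiv_fun_pow 2 hf]

lemma pd_congr (i : Fin n) (h : f =ᶠ[nhds x] g) : pd i f x = pd i g x := by
  simp [pd, h.fderiv_eq]

lemma ContDiffAt.differentiableAt_pd (i : Fin n) (hf : ContDiffAt ℝ 2 f x) :
    DifferentiableAt ℝ (pd i f) x :=
  ((hf.fderiv_right (m := 1) le_rfl).clm_apply contDiffAt_const).differentiableAt one_ne_zero

lemma pd_pd_sq (i j : Fin n) (hf : ContDiffAt ℝ 2 f x) :
    pd i (pd j (fun y => f y ^ 2)) x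
      = 2 * f x * pd i (pd j f) x + 2 * (pd i f x * pd j f x) := by
  have hdiff : ∀ᶠ y in nhds x, DifferentiableAt ℝ f y :=
    (hf.eventually (by simp)).mono fun y hy => hy.differentiableAt two_ne_zero
  have hpd_sq : pd j (fun y => f y ^ 2) =ᶠ[nhds x] fun y => (2 * f y) * pd j f y :=
    hdiff.mono fun y hy => pd_sq j hy
  have hfx := hf.differentiableAt two_ne_zero
  rw [pd_congr i hpd_sq, pd_mul i (hfx.const_mul 2) (hf.differentiableAt_pd j),
    pd_const_mul i 2 hfx]
  ring

end PartialDerivative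

section DirectionalDerivative

variable {n : ℕ} (F : (Fin n → ℝ) → Fin n → ℝ) {f g : (Fin n → ℝ) → ℝ} {x : Fin n → ℝ}

lemma gradDot_add (hf : DifferentiableAt ℝ f x) (hg : DifferentiableAt ℝ g x) :
    gradDot F (fun y => f y + g y) x = gradDot F f x + gradDot F g x := by
  simp only [gradDot, pd_add _ hf hg, mul_add, Finset.sum_add_distrib]

lemma gradDot_mul (hf : DifferentiableAt ℝ f x) (hg : DifferentiableAt ℝ g x) :
    gradDot F (fun y => f y * g y) x = f x * gradDot F g x + g x * gradDot F f x := by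
  simp only [gradDot, pd_mul _ hf hg, Finset.mul_sum, ← Finset.sum_add_distrib]
  exact Finset.sum_congr rfl fun i _ => by ring

lemma gradDot_const_mul (c : ℝ) (hf : DifferentiableAt ℝ f x) :
    gradDot F (fun y => c * f y) x = c * gradDot F f x := by
  simp only [gradDot, pd_const_mul _ c hf, Finset.mul_sum]
  exact Finset.sum_congr rfl fun i _ => by ring

end DirectionalDerivative

theorem stmt5_general (n : ℕ) (D : Set (Fin n → ℝ)) (hD : IsOpen D)
    (F : (Fin n → ℝ) → Fin n → ℝ)
    (T0 T1 V1 : (Fin n → ℝ) → ℝ)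
    (A : (Fin n → ℝ) → Matrix (Fin n) (Fin n) ℝ)
    (hT0 : ContDiffOn ℝ 2 T0 D) (hT1 : ContDiffOn ℝ 2 T1 D)
    (hV1 : ContDiffOn ℝ 2 V1 D)
    (h1 : ∀ x ∈ D, gradDot F T0 x = -1)
    (h2 : ∀ x ∈ D, gradDot F T1 x = -(1 / 2) * ∑ i, ∑ j, A x i j * pd i (pd j T0) x)
    (h3 : ∀ x ∈ D, gradDot F (fun y => V1 y + 2 * T0 y * T1 y) x
        + (1 / 2) * ∑ i, ∑ j, A x i j * pd i (pd j (fun y => (T0 y) ^ 2)) x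
        = -2 * T1 x) :
    ∀ x ∈ D, gradDot F V1 x = -∑ i, ∑ j, A x i j * (pd i T0 x * pd j T0 x) := by
  intro x hx
  have hT0x := hT0.contDiffAt (hD.mem_nhds hx)
  have dT0 := hT0x.differentiableAt two_ne_zero
  have dT1 := (hT1.contDiffAt (hD.mem_nhds hx)).differentiableAt two_ne_zero
  have dV1 := (hV1.contDiffAt (hD.mem_nhds hx)).differentiableAt two_ne_zero
  have hS1 : gradDot F (fun y => V1 y + 2 * T0 y * T1 y) x
      = gradDot F V1 x + 2 * T0 x * gradDot F T1 x + 2 * T1 x * gradDot F T0 x := by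
    rw [gradDot_add F (g := fun y => 2 * T0 y * T1 y) dV1 (by fun_prop),
      gradDot_mul F (f := fun y => 2 * T0 y) (dT0.const_mul 2) dT1, gradDot_const_mul F 2 dT0]
    ring
  have hHess : ∑ i, ∑ j, A x i j * pd i (pd j (fun y => (T0 y) ^ 2)) x
      = 2 * T0 x * ∑ i, ∑ j, A x i j * pd i (pd j T0) x
        + 2 * ∑ i, ∑ j, A x i j * (pd i T0 x * pd j T0 x) := by
    simp only [pd_pd_sq _ _ hT0x, mul_add, Finset.sum_add_distrib, Finset.mul_sum]
    congr 1 <;> exact Finset.sum_congr rfl fun i _ => Finset.sum_congr rfl fun j _ => by ring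
  linear_combination h3 x hx - hS1 - (1 / 2) * hHess - 2 * T1 x * h1 x hx - 2 * T0 x * h2 x hx

/-- key algebraic step of the noise decomposition theorem.
From `F·∇T₀ = -1`, `F·∇T₁ = -(1/2)Σ A_{ij} ∂²_{ij}T₀` and
`F·∇(V₁ + 2T₀T₁) + (1/2)Σ A_{ij}∂²_{ij}(T₀²) = -2T₁`, it follows that
`F·∇V₁ = -Σ A_{ij} ∂_i T₀ ∂_j T₀`. -/
theorem stmt5 (n : ℕ) (D : Set (Fin n → ℝ)) (hD : IsOpen D)
    (F : (Fin n → ℝ) → Fin n → ℝ)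
    (T0 T1 V1 : (Fin n → ℝ) → ℝ)
    (A : (Fin n → ℝ) → Matrix (Fin n) (Fin n) ℝ)
    (hAsymm : ∀ x ∈ D, (A x)ᵀ = A x)
    (hT0 : ContDiffOn ℝ 2 T0 D) (hT1 : ContDiffOn ℝ 2 T1 D)
    (hV1 : ContDiffOn ℝ 2 V1 D)
    (h1 : ∀ x ∈ D, gradDot F T0 x = -1)
    (h2 : ∀ x ∈ D, gradDot F T1 x = -(1 / 2) * ∑ i, ∑ j, A x i j * pd i (pd j T0) x)
    (h3 : ∀ x ∈ D, gradDot F (fun y => V1 y + 2 * T0 y * T1 y) x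
        + (1 / 2) * ∑ i, ∑ j, A x i j * pd i (pd j (fun y => (T0 y) ^ 2)) x
        = -2 * T1 x) :
    ∀ x ∈ D, gradDot F V1 x = -∑ i, ∑ j, A x i j * (pd i T0 x * pd j T0 x) :=
  stmt5_general n D hD F T0 T1 V1 A hT0 hT1 hV1 h1 h2 h3
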